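/- Let f: ℝⁿ → ℝ be differentiable and let L: ℝⁿ → ℝⁿ be a positive definite self-adjoint linear operator, and β ≥ 0. Then |f(x) - f(y) - ⟨∇f(y), x-y⟩| ≤ (β/2)⟨L(x-y), x-y⟩ for all x, y if and only if ⟨L⁻¹(∇f(x) - ∇f(y)), ∇f(x) - ∇f(y)⟩ ≤ β²⟨L(x-y), x-y⟩ for all x, y. -/

import Mathlib

/-!
Write `Q v = ⟪L v, v⟫` and `g = ∇f x - ∇f y`.

(⇐) Along the segment `t ↦ y + t (x - y)`, Cauchy–Schwarz for the form `Q` together with the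
gradient bound gives `|⟪∇f(y + t(x - y)) - ∇f y, x - y⟫| ≤ β t Q(x - y)`; integrating this
derivative bound from `0` to `1` gives the two-sided Taylor estimate.

(⇒) Comparing the Taylor estimates at a point `z` from `x` and from `y`, and taking `z` the midpoint
of `x, y` shifted by `±s`, gives `⟪g, s⟫ ≤ β (Q(x - y) / 4 + Q s)` for every `s`. For
`s = t L⁻¹ g` this is a quadratic inequality in `t`, and its discriminant is `≤ 0` exactly when
`⟪L⁻¹ g, g⟫ ≤ β² Q(x - y)`.
-/

open scoped RealInnerProductSpace
open Set

variable {E : Type*} [NormedAddCommGroup E] [InnerProductSpace ℝ E]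

theorem ContinuousLinearMap.IsPositive.inner_apply_sq_le {L : E →L[ℝ] E} (hL : L.IsPositive)
    (a d : E) : ⟪L a, d⟫ ^ 2 ≤ ⟪L a, a⟫ * ⟪L d, d⟫ := by
  have := LinearMap.BilinForm.apply_mul_apply_le_of_forall_zero_le
    ((innerₗ E).comp L.toLinearMap) hL.inner_nonneg_left a d
  simp only [LinearMap.comp_apply, innerₗ_apply_apply, ContinuousLinearMap.coe_coe] at this
  rwa [hL.inner_left_eq_inner_right d a, real_inner_comm (L a) d, ← sq] at this

theorem abs_sub_sub_inner_le_of_abs_inner_sub_le [CompleteSpace E] {f : E → ℝ} {f' : E → E}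
    (hf : ∀ x, HasGradientAt f (f' x) x) {x y : E} {C : ℝ}
    (h : ∀ t ∈ Ico (0 : ℝ) 1, |⟪f' (y + t • (x - y)) - f' y, x - y⟫| ≤ C * t) :
    |f x - f y - ⟪f' y, x - y⟫| ≤ C / 2 := by
  set d := x - y
  have hφ : ∀ t : ℝ, HasDerivAt (fun t => f (y + t • d) - f y - t * ⟪f' y, d⟫)
      ⟪f' (y + t • d) - f' y, d⟫ t := by
    intro t
    have hline : HasDerivAt (fun t : ℝ => y + t • d) d t := by
      simpa using ((hasDerivAt_id t).smul_const d).const_add y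
    have hf_line : HasDerivAt (fun t => f (y + t • d)) ⟪f' (y + t • d), d⟫ t := by
      simpa [InnerProductSpace.toDual_apply_apply, Function.comp_def] using
        (hf _).hasFDerivAt.comp_hasDerivAt t hline
    exact ((hf_line.sub_const (f y)).sub ((hasDerivAt_id' t).mul_const _)).congr_deriv
      (by rw [inner_sub_left, one_mul])
  have hB : ∀ t : ℝ, HasDerivAt (fun t => C / 2 * t ^ 2) (C * t) t := fun t =>
    ((hasDerivAt_pow 2 t).const_mul (C / 2)).congr_deriv (by ring)
  have := image_norm_le_of_norm_deriv_right_le_deriv_boundary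
    (fun t _ => (hφ t).continuousAt.continuousWithinAt) (fun t _ => (hφ t).hasDerivWithinAt)
    (by simp) hB h (right_mem_Icc.2 zero_le_one)
  rwa [one_smul, add_sub_cancel, one_mul, one_pow, mul_one, Real.norm_eq_abs] at this

section

variable {f : E → ℝ} {f' : E → E} {L Linv : E →L[ℝ] E} {β : ℝ}

theorem abs_sub_sub_inner_le_of_inner_inverse_sub_le [CompleteSpace E]
    (hf : ∀ x, HasGradientAt f (f' x) x) (hL : L.IsPositive) (hLinv : ∀ x, L (Linv x) = x)
    (hβ : 0 ≤ β)
    (H : ∀ x y, ⟪Linv (f' x - f' y), f' x - f' y⟫ ≤ β ^ 2 * ⟪L (x - y), x - y⟫) (x y : E) :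
    |f x - f y - ⟪f' y, x - y⟫| ≤ β / 2 * ⟪L (x - y), x - y⟫ := by
  set d := x - y
  have hD : 0 ≤ ⟪L d, d⟫ := hL.inner_nonneg_left d
  rw [div_mul_eq_mul_div, mul_comm β]
  refine abs_sub_sub_inner_le_of_abs_inner_sub_le hf fun t ht => ?_
  set g := f' (y + t • d) - f' y
  have hcs : ⟪g, d⟫ ^ 2 ≤ ⟪Linv g, g⟫ * ⟪L d, d⟫ := by
    simpa [hLinv, real_inner_comm g] using hL.inner_apply_sq_le (Linv g) d
  have hlip : ⟪Linv g, g⟫ ≤ β ^ 2 * (t * (t * ⟪L d, d⟫)) := by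
    simpa only [add_sub_cancel_left, map_smul, real_inner_smul_left, real_inner_smul_right]
      using H (y + t • d) y
  refine abs_le_of_sq_le_sq ?_ (by have := ht.1; positivity)
  calc ⟪g, d⟫ ^ 2 ≤ ⟪Linv g, g⟫ * ⟪L d, d⟫ := hcs
    _ ≤ β ^ 2 * (t * (t * ⟪L d, d⟫)) * ⟪L d, d⟫ := mul_le_mul_of_nonneg_right hlip hD
    _ = (⟪L d, d⟫ * β * t) ^ 2 := by ring

theorem abs_sub_add_inner_sub_inner_le
    (H : ∀ x y, |f x - f y - ⟪f' y, x - y⟫| ≤ β / 2 * ⟪L (x - y), x - y⟫) (x y z : E) :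
    |f x - f y + ⟪f' x, z - x⟫ - ⟪f' y, z - y⟫| ≤
      β / 2 * (⟪L (z - y), z - y⟫ + ⟪L (z - x), z - x⟫) := by
  calc |f x - f y + ⟪f' x, z - x⟫ - ⟪f' y, z - y⟫|
      = |(f z - f y - ⟪f' y, z - y⟫) - (f z - f x - ⟪f' x, z - x⟫)| := by ring_nf
    _ ≤ |f z - f y - ⟪f' y, z - y⟫| + |f z - f x - ⟪f' x, z - x⟫| := abs_sub _ _
    _ ≤ _ := by linarith [H z y, H z x]

theorem inner_sub_le_of_abs_sub_sub_inner_le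
    (H : ∀ x y, |f x - f y - ⟪f' y, x - y⟫| ≤ β / 2 * ⟪L (x - y), x - y⟫) (x y s : E) :
    ⟪f' x - f' y, s⟫ ≤ β * (⟪L (x - y), x - y⟫ / 4 + ⟪L s, s⟫) := by
  -- `y + e ± s` is the midpoint of `x` and `y` shifted by `±s`
  obtain ⟨e, rfl⟩ : ∃ e, x = y + e + e := ⟨(2 : ℝ)⁻¹ • (x - y), by module⟩
  have hplus := abs_sub_add_inner_sub_inner_le H (y + e + e) y (y + e + s)
  have hminus := abs_sub_add_inner_sub_inner_le H (y + e + e) y (y + e - s)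
  rw [abs_le] at hplus hminus
  simp only [map_add, map_sub, inner_add_left, inner_add_right, inner_sub_left,
    inner_sub_right, add_sub_add_left_eq_sub] at hplus hminus ⊢
  linarith

theorem inner_inverse_le_of_forall_inner_le (hL : L.IsPositive) (hLinv : ∀ x, L (Linv x) = x)
    {g : E} {a : ℝ} (ha : 0 ≤ a) (h : ∀ s, ⟪g, s⟫ ≤ β * (a + ⟪L s, s⟫)) :
    ⟪Linv g, g⟫ ≤ 4 * β ^ 2 * a := by
  set S := ⟪Linv g, g⟫
  have hS : 0 ≤ S := by
    simpa only [hLinv, real_inner_comm (Linv g) g] using hL.inner_nonneg_left (Linv g)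
  have hquad : ∀ t, 0 ≤ (β * S) * (t * t) + (-S) * t + β * a := fun t => by
    have := h (t • Linv g)
    simp only [map_smul, hLinv, real_inner_smul_left, real_inner_smul_right,
      real_inner_comm (Linv g) g] at this
    linarith
  have hdisc := discrim_le_zero hquad
  rw [discrim] at hdisc
  rcases hS.eq_or_lt with hS0 | hSpos
  · rw [← hS0]; positivity
  · refine le_of_mul_le_mul_left ?_ hSpos
    linarith [show (-S) ^ 2 - 4 * (β * S) * (β * a) = S * S - S * (4 * β ^ 2 * a) by ring]

end

theorem stmt1 {n : ℕ} (f : EuclideanSpace ℝ (Fin n) → ℝ)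
    (f' : EuclideanSpace ℝ (Fin n) → EuclideanSpace ℝ (Fin n))
    (hf : ∀ x, HasGradientAt f (f' x) x)
    (L Linv : EuclideanSpace ℝ (Fin n) →L[ℝ] EuclideanSpace ℝ (Fin n))
    (hLsa : ∀ x y, ⟪L x, y⟫ = ⟪x, L y⟫)
    (hLpd : ∃ m > (0:ℝ), ∀ x, m * ‖x‖^2 ≤ ⟪L x, x⟫)
    (hLinv : ∀ x, Linv (L x) = x ∧ L (Linv x) = x)
    (β : ℝ) (hβ : 0 ≤ β) :
    (∀ x y, |f x - f y - ⟪f' y, x - y⟫| ≤ β/2 * ⟪L (x - y), x - y⟫) ↔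
    (∀ x y, ⟪Linv (f' x - f' y), f' x - f' y⟫ ≤ β^2 * ⟪L (x - y), x - y⟫) := by
  obtain ⟨m, hm, hmL⟩ := hLpd
  have hL : L.IsPositive :=
    (L.isPositive_iff).2 ⟨hLsa, fun x => (by positivity : 0 ≤ m * ‖x‖ ^ 2).trans (hmL x)⟩
  have hLinv_right : ∀ x, L (Linv x) = x := fun x => (hLinv x).2
  refine ⟨fun H x y => ?_, abs_sub_sub_inner_le_of_inner_inverse_sub_le hf hL hLinv_right hβ⟩
  have hD : 0 ≤ ⟪L (x - y), x - y⟫ / 4 := by have := hL.inner_nonneg_left (x - y); positivity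
  have := inner_inverse_le_of_forall_inner_le hL hLinv_right hD
    (inner_sub_le_of_abs_sub_sub_inner_le H x y)
  linarith
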